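/- VS type splitting is associative in the following sense: if τ ⇝ τ₁ ⋈ τ₂ and τ₁ ⇝ τ₁' ⋈ τ₁'', then there exists τ' such that τ ⇝ τ' ⋈ τ₁'' and τ' ⇝ τ₁' ⋈ τ₂. -/
import Mathlib


/-- Availability annotations -/
inductive Avail : Type
  | avail : Avail
  | unavail : Avail
deriving DecidableEq

/-- Vertex structure (VS) types: single vertex, annotated products,
    type variables, corecursive types. -/
inductive VSTy : Type
  | vert : VSTy
  | prod : VSTy → Avail → VSTy → Avail → VSTy
  | tvar : ℕ → VSTy
  | corec : ℕ → VSTy → VSTy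
deriving DecidableEq

/-- Substitution of a VS type for a type variable (capture-avoiding
    in the sense of not descending under a binder that rebinds `t`). -/
def VSTy.subst (t : ℕ) (σ : VSTy) : VSTy → VSTy
  | .vert => .vert
  | .prod τ₁ a₁ τ₂ a₂ => .prod (VSTy.subst t σ τ₁) a₁ (VSTy.subst t σ τ₂) a₂
  | .tvar s => if s = t then σ else .tvar s
  | .corec s τ => if s = t then .corec s τ else .corec s (VSTy.subst t σ τ)

/-- VS subtyping. -/
inductive SubTy : VSTy → VSTy → Prop
  | refl (τ : VSTy) : SubTy τ τ
  | trans {τ τ'' τ' : VSTy} : SubTy τ τ'' → SubTy τ'' τ' → SubTy τ τ'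
  | prodLeft (τ₁ : VSTy) (a₁ : Avail) (τ₂ : VSTy) (a₂ : Avail) (τ₃ : VSTy) :
      SubTy (.prod τ₁ a₁ τ₂ a₂) (.prod τ₃ .unavail τ₂ a₂)
  | prodRight (τ₁ : VSTy) (a₁ : Avail) (τ₂ : VSTy) (a₂ : Avail) (τ₃ : VSTy) :
      SubTy (.prod τ₁ a₁ τ₂ a₂) (.prod τ₁ a₁ τ₃ .unavail)
  | prodCong {τ₁ τ₁' τ₂ τ₂' : VSTy} (a₁ a₂ : Avail) :
      SubTy τ₁ τ₁' → SubTy τ₂ τ₂' → SubTy (.prod τ₁ a₁ τ₂ a₂) (.prod τ₁' a₁ τ₂' a₂)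
  | corec1 (t : ℕ) (τ : VSTy) : SubTy (.corec t τ) (VSTy.subst t (.corec t τ) τ)
  | corec2 (t : ℕ) (τ : VSTy) : SubTy (VSTy.subst t (.corec t τ) τ) (.corec t τ)

/-- VS type splitting  τ ⇝ τ₁ ⋈ τ₂. -/
inductive VSplit : VSTy → VSTy → VSTy → Prop
  | prod (τ₁ τ₂ : VSTy) :
      VSplit (.prod τ₁ .avail τ₂ .avail)
            (.prod τ₁ .avail τ₂ .unavail)
            (.prod τ₁ .unavail τ₂ .avail)
  | both {τ₁ τ₁' τ₁'' τ₂ τ₂' τ₂'' : VSTy} :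
      VSplit τ₁ τ₁' τ₁'' → VSplit τ₂ τ₂' τ₂'' →
      VSplit (.prod τ₁ .avail τ₂ .avail)
            (.prod τ₁' .avail τ₂' .avail)
            (.prod τ₁'' .avail τ₂'' .avail)
  | left {τ₁ τ₁' τ₁'' : VSTy} (τ₂ : VSTy) (a : Avail) :
      VSplit τ₁ τ₁' τ₁'' →
      VSplit (.prod τ₁ .avail τ₂ a)
            (.prod τ₁' .avail τ₂ a)
            (.prod τ₁'' .avail τ₂ .unavail)
  | right {τ₂ τ₂' τ₂'' : VSTy} (τ₁ : VSTy) (a : Avail) :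
      VSplit τ₂ τ₂' τ₂'' →
      VSplit (.prod τ₁ a τ₂ .avail)
            (.prod τ₁ a τ₂' .avail)
            (.prod τ₁ .unavail τ₂'' .avail)
  | corec {t : ℕ} {τ τ₁ τ₂ : VSTy} :
      VSplit (VSTy.subst t (.corec t τ) τ) τ₁ τ₂ → VSplit (.corec t τ) τ₁ τ₂
  | sub {τ τ₁ τ₁' τ₂ : VSTy} :
      VSplit τ τ₁' τ₂ → SubTy τ₁' τ₁ → VSplit τ τ₁ τ₂
  | comm {τ τ₁ τ₂ : VSTy} : VSplit τ τ₂ τ₁ → VSplit τ τ₁ τ₂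

/-- Names bound in contexts: VS variables or generators. -/
inductive VName : Type
  | var : ℕ → VName
  | gen : ℕ → VName
deriving DecidableEq

/-- A context binds names to VS types. -/
abbrev Ctx := List (VName × VSTy)

/-- Affine context splitting  Ω ⇝ Ω₁ ⋈ Ω₂. -/
inductive CtxSplit : Ctx → Ctx → Ctx → Prop
  | empty : CtxSplit [] [] []
  | comm {Ω Ω₁ Ω₂ : Ctx} : CtxSplit Ω Ω₂ Ω₁ → CtxSplit Ω Ω₁ Ω₂
  | bind {Ω Ω₁ Ω₂ : Ctx} (x : VName) (τ : VSTy) :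
      CtxSplit Ω Ω₁ Ω₂ → CtxSplit ((x, τ) :: Ω) ((x, τ) :: Ω₁) Ω₂
  | typeSplit {Ω Ω₁ Ω₂ : Ctx} {τ τ₁ τ₂ : VSTy} (x : VName) :
      CtxSplit Ω Ω₁ Ω₂ → VSplit τ τ₁ τ₂ →
      CtxSplit ((x, τ) :: Ω) ((x, τ₁) :: Ω₁) ((x, τ₂) :: Ω₂)

/-- Vertex structures. -/
inductive VS : Type
  | var : ℕ → VS
  | gen : ℕ → VS
  | pair : VS → VS → VS
  | fst : VS → VS
  | snd : VS → VS
deriving DecidableEq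

/-- Typing of vertex structures:  Ω; Ψ ⊢ V : τ, with affine context Ω
    and unrestricted context Ψ. -/
inductive HasTy : Ctx → Ctx → VS → VSTy → Prop
  | omegaVar {Ω Ψ : Ctx} {u : ℕ} {τ : VSTy} :
      (VName.var u, τ) ∈ Ω → HasTy Ω Ψ (.var u) τ
  | psiVar {Ω Ψ : Ctx} {u : ℕ} {τ : VSTy} :
      (VName.var u, τ) ∈ Ψ → HasTy Ω Ψ (.var u) τ
  | omegaGen {Ω Ψ : Ctx} {g : ℕ} {τ : VSTy} :
      (VName.gen g, τ) ∈ Ω → HasTy Ω Ψ (.gen g) τ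
  | psiGen {Ω Ψ : Ctx} {g : ℕ} {τ : VSTy} :
      (VName.gen g, τ) ∈ Ψ → HasTy Ω Ψ (.gen g) τ
  | pair {Ω Ω₁ Ω₂ Ψ : Ctx} {V₁ V₂ : VS} {τ₁ τ₂ : VSTy} :
      CtxSplit Ω Ω₁ Ω₂ → HasTy Ω₁ Ψ V₁ τ₁ → HasTy Ω₂ Ψ V₂ τ₂ →
      HasTy Ω Ψ (.pair V₁ V₂) (.prod τ₁ .avail τ₂ .avail)
  | onlyLeftPair {Ω Ψ Ψ' : Ctx} {V₁ V₂ : VS} {τ₁ τ₂ : VSTy} :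
      HasTy Ω Ψ V₁ τ₁ → HasTy [] Ψ' V₂ τ₂ →
      HasTy Ω Ψ (.pair V₁ V₂) (.prod τ₁ .avail τ₂ .unavail)
  | onlyRightPair {Ω Ψ Ψ' : Ctx} {V₁ V₂ : VS} {τ₁ τ₂ : VSTy} :
      HasTy [] Ψ' V₁ τ₁ → HasTy Ω Ψ V₂ τ₂ →
      HasTy Ω Ψ (.pair V₁ V₂) (.prod τ₁ .unavail τ₂ .avail)
  | fst {Ω Ψ : Ctx} {V : VS} {τ₁ τ₂ : VSTy} {a : Avail} :
      HasTy Ω Ψ V (.prod τ₁ .avail τ₂ a) → HasTy Ω Ψ (.fst V) τ₁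
  | snd {Ω Ψ : Ctx} {V : VS} {τ₁ τ₂ : VSTy} {a : Avail} :
      HasTy Ω Ψ V (.prod τ₁ a τ₂ .avail) → HasTy Ω Ψ (.snd V) τ₂
  | sub {Ω Ψ : Ctx} {V : VS} {τ' τ : VSTy} :
      HasTy Ω Ψ V τ' → SubTy τ' τ → HasTy Ω Ψ V τ

/-- Big-step normalization of vertex structures  V ↓ V'. -/
inductive VNorm : VS → VS → Prop
  | var (u : ℕ) : VNorm (.var u) (.var u)
  | gen (g : ℕ) : VNorm (.gen g) (.gen g)
  | pair {V₁ V₁' V₂ V₂' : VS} :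
      VNorm V₁ V₁' → VNorm V₂ V₂' → VNorm (.pair V₁ V₂) (.pair V₁' V₂')
  | fstPair {V V₁ V₂ : VS} : VNorm V (.pair V₁ V₂) → VNorm (.fst V) V₁
  | fstNotPair {V V' : VS} :
      VNorm V V' → (∀ V₁ V₂, V' ≠ .pair V₁ V₂) → VNorm (.fst V) (.fst V')
  | sndPair {V V₁ V₂ : VS} : VNorm V (.pair V₁ V₂) → VNorm (.snd V) V₂
  | sndNotPair {V V' : VS} :
      VNorm V V' → (∀ V₁ V₂, V' ≠ .pair V₁ V₂) → VNorm (.snd V) (.snd V')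

/-- Vertex structure equivalence  Ψ ⊢ V ≡ V' : τ. -/
inductive VSEquiv : Ctx → VS → VS → VSTy → Prop
  | refl {Ψ : Ctx} {V : VS} {τ : VSTy} :
      HasTy [] Ψ V τ → VSEquiv Ψ V V τ
  | comm {Ψ : Ctx} {V V' : VS} {τ : VSTy} :
      VSEquiv Ψ V' V τ → VSEquiv Ψ V V' τ
  | trans {Ψ : Ctx} {V V'' V' : VS} {τ : VSTy} :
      VSEquiv Ψ V V'' τ → VSEquiv Ψ V'' V' τ → VSEquiv Ψ V V' τ
  | pair {Ψ : Ctx} {V₁ V₁' V₂ V₂' : VS} {τ₁ τ₂ : VSTy} :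
      VSEquiv Ψ V₁ V₁' τ₁ → VSEquiv Ψ V₂ V₂' τ₂ →
      VSEquiv Ψ (.pair V₁ V₂) (.pair V₁' V₂') (.prod τ₁ .avail τ₂ .avail)
  | onlyLeftPair {Ψ Ψ' : Ctx} {V₁ V₁' V₂ V₂' : VS} {τ₁ τ₂ : VSTy} :
      VSEquiv Ψ V₁ V₁' τ₁ → VSEquiv Ψ' V₂ V₂' τ₂ →
      VSEquiv Ψ (.pair V₁ V₂) (.pair V₁' V₂') (.prod τ₁ .avail τ₂ .unavail)
  | onlyRightPair {Ψ Ψ' : Ctx} {V₁ V₁' V₂ V₂' : VS} {τ₁ τ₂ : VSTy} :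
      VSEquiv Ψ' V₁ V₁' τ₁ → VSEquiv Ψ V₂ V₂' τ₂ →
      VSEquiv Ψ (.pair V₁ V₂) (.pair V₁' V₂') (.prod τ₁ .unavail τ₂ .avail)
  | fst {Ψ : Ctx} {V V' : VS} {τ₁ τ₂ : VSTy} {a : Avail} :
      VSEquiv Ψ V V' (.prod τ₁ .avail τ₂ a) → VSEquiv Ψ (.fst V) (.fst V') τ₁
  | snd {Ψ : Ctx} {V V' : VS} {τ₁ τ₂ : VSTy} {a : Avail} :
      VSEquiv Ψ V V' (.prod τ₁ a τ₂ .avail) → VSEquiv Ψ (.snd V) (.snd V') τ₂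
  | fstPair {Ψ : Ctx} {V V₁ V₂ : VS} {τ₁ τ₂ : VSTy} {a : Avail} :
      VSEquiv Ψ V (.pair V₁ V₂) (.prod τ₁ .avail τ₂ a) →
      VSEquiv Ψ (.fst V) V₁ τ₁
  | sndPair {Ψ : Ctx} {V V₁ V₂ : VS} {τ₁ τ₂ : VSTy} {a : Avail} :
      VSEquiv Ψ V (.pair V₁ V₂) (.prod τ₁ a τ₂ .avail) →
      VSEquiv Ψ (.snd V) V₂ τ₂
  | sub {Ψ : Ctx} {V V' : VS} {τ' τ : VSTy} :
      VSEquiv Ψ V V' τ' → SubTy τ' τ → VSEquiv Ψ V V' τ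

/-- VNeutral vertex structures: variables, generators, and their projections. -/
inductive VNeutral : VS → Prop
  | var (u : ℕ) : VNeutral (.var u)
  | gen (g : ℕ) : VNeutral (.gen g)
  | fst {V : VS} : VNeutral V → VNeutral (.fst V)
  | snd {V : VS} : VNeutral V → VNeutral (.snd V)

/-- VNormal vertex structures: neutral structures and pairs of normal structures. -/
inductive VNormal : VS → Prop
  | neutral {V : VS} : VNeutral V → VNormal V
  | pair {V₁ V₂ : VS} : VNormal V₁ → VNormal V₂ → VNormal (.pair V₁ V₂)

/-- Vertex paths: a generator followed by a sequence of projections. -/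
inductive IsPath : VS → Prop
  | gen (g : ℕ) : IsPath (.gen g)
  | fst {p : VS} : IsPath p → IsPath (.fst p)
  | snd {p : VS} : IsPath p → IsPath (.snd p)

/-- A context containing only generator bindings. -/
def GenOnly (Ω : Ctx) : Prop := ∀ e ∈ Ω, ∃ g τ, e = (VName.gen g, τ)

/-- Substitution of a vertex structure for a VS variable. -/
def VS.subst (u : ℕ) (W : VS) : VS → VS
  | .var v => if v = u then W else .var v
  | .gen g => .gen g
  | .pair V₁ V₂ => .pair (VS.subst u W V₁) (VS.subst u W V₂)
  | .fst V => .fst (VS.subst u W V)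
  | .snd V => .snd (VS.subst u W V)

section SplitAssocAux

/-- Upgrade the second component of a split along subtyping. -/
lemma VSplit.up2 {t u v v' : VSTy} (h : VSplit t u v) (s : SubTy v v') :
    VSplit t u v' := .comm (.sub (.comm h) s)

lemma vsplit_subL {t α β} (h : VSplit t α β) :
    ∀ (τ₃ τ₂ : VSTy) (a₂ : Avail), t = .prod τ₃ .unavail τ₂ a₂ →
    ∀ (τ₁ : VSTy) (a₁ : Avail), VSplit (.prod τ₁ a₁ τ₂ a₂) α β := by
  induction h with
  | prod _ _ => intro _ _ _ he; cases he
  | both _ _ _ _ => intro _ _ _ he; cases he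
  | left _ _ _ _ => intro _ _ _ he; cases he
  | right τa a h ih =>
      intro τ₃ τC a₂ he; cases he
      intro τ₁ a₁
      exact ((VSplit.right τ₁ a₁ h).sub (SubTy.prodLeft τ₁ a₁ _ .avail _)).up2
        (SubTy.prodLeft τ₁ .unavail _ .avail _)
  | corec _ _ => intro _ _ _ he; cases he
  | sub _ s ih => intro τ₃ τC a₂ he τ₁ a₁; exact (ih τ₃ τC a₂ he τ₁ a₁).sub s
  | comm _ ih => intro τ₃ τC a₂ he τ₁ a₁; exact (ih τ₃ τC a₂ he τ₁ a₁).comm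

lemma vsplit_subR {t α β} (h : VSplit t α β) :
    ∀ (τ₁ : VSTy) (a₁ : Avail) (τ₃ : VSTy), t = .prod τ₁ a₁ τ₃ .unavail →
    ∀ (τ₂ : VSTy) (a₂ : Avail), VSplit (.prod τ₁ a₁ τ₂ a₂) α β := by
  induction h with
  | prod _ _ => intro _ _ _ he; cases he
  | both _ _ _ _ => intro _ _ _ he; cases he
  | left τb a h ih =>
      intro τ₁ a₁ τ₃ he; cases he
      intro τ₂ a₂
      exact ((VSplit.left τ₂ a₂ h).sub (SubTy.prodRight _ .avail τ₂ a₂ _)).up2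
        (SubTy.prodRight _ .avail τ₂ .unavail _)
  | right _ _ _ _ => intro _ _ _ he; cases he
  | corec _ _ => intro _ _ _ he; cases he
  | sub _ s ih => intro τ₁ a₁ τ₃ he τ₂ a₂; exact (ih τ₁ a₁ τ₃ he τ₂ a₂).sub s
  | comm _ ih => intro τ₁ a₁ τ₃ he τ₂ a₂; exact (ih τ₁ a₁ τ₃ he τ₂ a₂).comm

lemma vsplit_cong {t α β} (h : VSplit t α β) :
    ∀ (ρ₁' : VSTy) (a₁ : Avail) (ρ₂' : VSTy) (a₂ : Avail), t = .prod ρ₁' a₁ ρ₂' a₂ →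
    ∀ (ρ₁ ρ₂ : VSTy), SubTy ρ₁ ρ₁' → SubTy ρ₂ ρ₂' →
    (∀ u v, VSplit ρ₁' u v → VSplit ρ₁ u v) →
    (∀ u v, VSplit ρ₂' u v → VSplit ρ₂ u v) →
    VSplit (.prod ρ₁ a₁ ρ₂ a₂) α β := by
  induction h with
  | prod τa τb =>
      intro ρ₁' a₁ ρ₂' a₂ he; cases he
      intro ρ₁ ρ₂ s₁ s₂ _ _
      exact ((VSplit.prod ρ₁ ρ₂).sub (SubTy.prodCong .avail .unavail s₁ s₂)).up2
        (SubTy.prodCong .unavail .avail s₁ s₂)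
  | both h1 h2 _ _ =>
      intro ρ₁' a₁ ρ₂' a₂ he; cases he
      intro ρ₁ ρ₂ _ _ f₁ f₂
      exact VSplit.both (f₁ _ _ h1) (f₂ _ _ h2)
  | left τb a h _ =>
      intro ρ₁' a₁ ρ₂' a₂ he; cases he
      intro ρ₁ ρ₂ s₁ s₂ f₁ _
      exact ((VSplit.left ρ₂ a (f₁ _ _ h)).sub
          (SubTy.prodCong .avail a (SubTy.refl _) s₂)).up2
        (SubTy.prodCong .avail .unavail (SubTy.refl _) s₂)
  | right τa a h _ =>
      intro ρ₁' a₁ ρ₂' a₂ he; cases he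
      intro ρ₁ ρ₂ s₁ s₂ _ f₂ 
      exact ((VSplit.right ρ₁ a (f₂ _ _ h)).sub
          (SubTy.prodCong a .avail s₁ (SubTy.refl _))).up2
        (SubTy.prodCong .unavail .avail s₁ (SubTy.refl _))
  | corec _ _ => intro _ _ _ _ he; cases he
  | sub _ s ih =>
      intro ρ₁' a₁ ρ₂' a₂ he ρ₁ ρ₂ s₁ s₂ f₁ f₂
      exact (ih ρ₁' a₁ ρ₂' a₂ he ρ₁ ρ₂ s₁ s₂ f₁ f₂).sub s
  | comm _ ih =>
      intro ρ₁' a₁ ρ₂' a₂ he ρ₁ ρ₂ s₁ s₂ f₁ f₂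
      exact (ih ρ₁' a₁ ρ₂' a₂ he ρ₁ ρ₂ s₁ s₂ f₁ f₂).comm

lemma vsplit_unroll {t α β} (h : VSplit t α β) :
    ∀ (s : ℕ) (ρ : VSTy), t = .corec s ρ →
    VSplit (VSTy.subst s (.corec s ρ) ρ) α β := by
  induction h with
  | prod _ _ => intro _ _ he; cases he
  | both _ _ _ _ => intro _ _ he; cases he
  | left _ _ _ _ => intro _ _ he; cases he
  | right _ _ _ _ => intro _ _ he; cases he
  | corec h _ => intro s ρ he; cases he; exact h
  | sub _ s' ih => intro s ρ he; exact (ih s ρ he).sub s'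
  | comm _ ih => intro s ρ he; exact (ih s ρ he).comm

/-- Splitting is closed under subtyping of the subject (downward). -/
lemma split_sub {σ₀ σ : VSTy} (s : SubTy σ₀ σ) :
    ∀ {α β : VSTy}, VSplit σ α β → VSplit σ₀ α β := by
  induction s with
  | refl _ => exact fun h => h
  | trans _ _ ih1 ih2 => exact fun h => ih1 (ih2 h)
  | prodLeft τ₁ a₁ τ₂ a₂ τ₃ => exact fun h => vsplit_subL h τ₃ τ₂ a₂ rfl τ₁ a₁
  | prodRight τ₁ a₁ τ₂ a₂ τ₃ => exact fun h => vsplit_subR h τ₁ a₁ τ₃ rfl τ₂ a₂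
  | prodCong a₁ a₂ s₁ s₂ ih₁ ih₂ =>
      exact fun h => vsplit_cong h _ a₁ _ a₂ rfl _ _ s₁ s₂
        (fun _ _ hh => ih₁ hh) (fun _ _ hh => ih₂ hh)
  | corec1 t τ => exact fun h => .corec h
  | corec2 t τ => exact fun h => vsplit_unroll h t τ rfl

/-- Splitting without the subsumption rule. -/
inductive NSplit : VSTy → VSTy → VSTy → Prop
  | prod (τ₁ τ₂ : VSTy) :
      NSplit (.prod τ₁ .avail τ₂ .avail) (.prod τ₁ .avail τ₂ .unavail)
        (.prod τ₁ .unavail τ₂ .avail)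
  | both {τ₁ τ₁' τ₁'' τ₂ τ₂' τ₂'' : VSTy} :
      NSplit τ₁ τ₁' τ₁'' → NSplit τ₂ τ₂' τ₂'' →
      NSplit (.prod τ₁ .avail τ₂ .avail) (.prod τ₁' .avail τ₂' .avail)
        (.prod τ₁'' .avail τ₂'' .avail)
  | left {τ₁ τ₁' τ₁'' : VSTy} (τ₂ : VSTy) (a : Avail) :
      NSplit τ₁ τ₁' τ₁'' →
      NSplit (.prod τ₁ .avail τ₂ a) (.prod τ₁' .avail τ₂ a)
        (.prod τ₁'' .avail τ₂ .unavail)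
  | right {τ₂ τ₂' τ₂'' : VSTy} (τ₁ : VSTy) (a : Avail) :
      NSplit τ₂ τ₂' τ₂'' →
      NSplit (.prod τ₁ a τ₂ .avail) (.prod τ₁ a τ₂' .avail)
        (.prod τ₁ .unavail τ₂'' .avail)
  | corec {t : ℕ} {τ τ₁ τ₂ : VSTy} :
      NSplit (VSTy.subst t (.corec t τ) τ) τ₁ τ₂ → NSplit (.corec t τ) τ₁ τ₂
  | comm {τ τ₁ τ₂ : VSTy} : NSplit τ τ₂ τ₁ → NSplit τ τ₁ τ₂

lemma NSplit.toV {τ α β : VSTy} (h : NSplit τ α β) : VSplit τ α β := by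
  induction h with
  | prod τ₁ τ₂ => exact .prod τ₁ τ₂
  | both _ _ ih1 ih2 => exact .both ih1 ih2
  | left τ₂ a _ ih => exact .left τ₂ a ih
  | right τ₁ a _ ih => exact .right τ₁ a ih
  | corec _ ih => exact .corec ih
  | comm _ ih => exact .comm ih

/-- Oriented, top-level structural splits of a product. -/
inductive HSplit : VSTy → VSTy → VSTy → Prop
  | prod (τ₁ τ₂ : VSTy) :
      HSplit (.prod τ₁ .avail τ₂ .avail) (.prod τ₁ .avail τ₂ .unavail)
        (.prod τ₁ .unavail τ₂ .avail)
  | both {τ₁ τ₁' τ₁'' τ₂ τ₂' τ₂'' : VSTy} :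
      NSplit τ₁ τ₁' τ₁'' → NSplit τ₂ τ₂' τ₂'' →
      HSplit (.prod τ₁ .avail τ₂ .avail) (.prod τ₁' .avail τ₂' .avail)
        (.prod τ₁'' .avail τ₂'' .avail)
  | left {τ₁ τ₁' τ₁'' : VSTy} (τ₂ : VSTy) (a : Avail) :
      NSplit τ₁ τ₁' τ₁'' →
      HSplit (.prod τ₁ .avail τ₂ a) (.prod τ₁' .avail τ₂ a)
        (.prod τ₁'' .avail τ₂ .unavail)
  | right {τ₂ τ₂' τ₂'' : VSTy} (τ₁ : VSTy) (a : Avail) :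
      NSplit τ₂ τ₂' τ₂'' →
      HSplit (.prod τ₁ a τ₂ .avail) (.prod τ₁ a τ₂' .avail)
        (.prod τ₁ .unavail τ₂'' .avail)

lemma nsplit_orient {t α β : VSTy} (h : NSplit t α β) :
    ∀ (s₁ : VSTy) (b₁ : Avail) (s₂ : VSTy) (b₂ : Avail), t = .prod s₁ b₁ s₂ b₂ →
    HSplit t α β ∨ HSplit t β α := by
  induction h with
  | prod τ₁ τ₂ => exact fun _ _ _ _ _ => .inl (.prod τ₁ τ₂)
  | both h1 h2 _ _ => exact fun _ _ _ _ _ => .inl (.both h1 h2)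
  | left τ₂ a h _ => exact fun _ _ _ _ _ => .inl (.left τ₂ a h)
  | right τ₁ a h _ => exact fun _ _ _ _ _ => .inl (.right τ₁ a h)
  | corec _ _ => intro _ _ _ _ he; cases he
  | comm _ ih =>
      intro s₁ b₁ s₂ b₂ he
      rcases ih s₁ b₁ s₂ b₂ he with h' | h'
      · exact .inr h'
      · exact .inl h'

lemma vsplit_extract {τ α β : VSTy} (h : VSplit τ α β) :
    ∃ α₀ β₀, NSplit τ α₀ β₀ ∧ SubTy α₀ α ∧ SubTy β₀ β := by
  induction h with
  | prod τ₁ τ₂ => exact ⟨_, _, .prod τ₁ τ₂, .refl _, .refl _⟩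
  | both _ _ ih1 ih2 =>
      obtain ⟨p, q, n1, s1, s2⟩ := ih1
      obtain ⟨r, s, n2, s3, s4⟩ := ih2
      exact ⟨_, _, .both n1 n2, .prodCong _ _ s1 s3, .prodCong _ _ s2 s4⟩
  | left τ₂ a _ ih =>
      obtain ⟨p, q, n, s1, s2⟩ := ih
      exact ⟨_, _, .left τ₂ a n, .prodCong _ _ s1 (.refl _), .prodCong _ _ s2 (.refl _)⟩
  | right τ₁ a _ ih =>
      obtain ⟨p, q, n, s1, s2⟩ := ih
      exact ⟨_, _, .right τ₁ a n, .prodCong _ _ (.refl _) s1, .prodCong _ _ (.refl _) s2⟩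
  | corec _ ih =>
      obtain ⟨p, q, n, s1, s2⟩ := ih
      exact ⟨p, q, .corec n, s1, s2⟩
  | sub _ s ih =>
      obtain ⟨p, q, n, s1, s2⟩ := ih
      exact ⟨p, q, n, s1.trans s, s2⟩
  | comm _ ih =>
      obtain ⟨p, q, n, s1, s2⟩ := ih
      exact ⟨q, p, .comm n, s2, s1⟩

def PP (τ x y : VSTy) : Prop :=
  ∀ α β : VSTy, NSplit x α β →
    (∃ σ, VSplit τ σ β ∧ VSplit σ α y) ∧ (∃ σ, VSplit τ σ α ∧ VSplit σ β y)

lemma PP_of_key {τ x y : VSTy} {s₁ : VSTy} {b₁ : Avail} {s₂ : VSTy} {b₂ : Avail}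
    (hx : x = .prod s₁ b₁ s₂ b₂)
    (key : ∀ α β, HSplit x α β →
      (∃ σ, VSplit τ σ β ∧ VSplit σ α y) ∧ (∃ σ, VSplit τ σ α ∧ VSplit σ β y)) :
    PP τ x y := by
  intro α β hin
  rcases nsplit_orient hin s₁ b₁ s₂ b₂ hx with hH | hH
  · exact key α β hH
  · exact ⟨(key β α hH).2, (key β α hH).1⟩
lemma key_both {A A' A'' B B' B'' : VSTy}
    (hA : VSplit A A' A'') (hB : VSplit B B' B'')
    (IHA : PP A A' A'') (IHB : PP B B' B'') :
    ∀ α β, HSplit (.prod A' .avail B' .avail) α β →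
      (∃ σ, VSplit (.prod A .avail B .avail) σ β ∧
        VSplit σ α (.prod A'' .avail B'' .avail)) ∧
      (∃ σ, VSplit (.prod A .avail B .avail) σ α ∧
        VSplit σ β (.prod A'' .avail B'' .avail)) := by
  intro α β hH
  cases hH with
  | prod =>
      constructor
      · exact ⟨.prod A .avail B'' .avail,
          (VSplit.right A .avail (VSplit.comm hB)).up2
            (SubTy.prodLeft A .unavail B' .avail A'),
          (VSplit.left B'' .avail (VSplit.comm hA)).comm.sub
            (SubTy.prodRight A' .avail B'' .unavail B')⟩
      · exact ⟨.prod A'' .avail B .avail,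
          (VSplit.left B .avail (VSplit.comm hA)).up2
            (SubTy.prodRight A' .avail B .unavail B'),
          (VSplit.right A'' .avail (VSplit.comm hB)).comm.sub
            (SubTy.prodLeft A'' .unavail B' .avail A')⟩
  | both hA' hB' =>
      obtain ⟨⟨σA, a1, a2⟩, ⟨σA2, a3, a4⟩⟩ := IHA _ _ hA'
      obtain ⟨⟨σB, b1, b2⟩, ⟨σB2, b3, b4⟩⟩ := IHB _ _ hB'
      exact ⟨⟨.prod σA .avail σB .avail, .both a1 b1, .both a2 b2⟩,
        ⟨.prod σA2 .avail σB2 .avail, .both a3 b3, .both a4 b4⟩⟩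
  | left _ _ hA' =>
      obtain ⟨⟨σA, a1, a2⟩, ⟨σA2, a3, a4⟩⟩ := IHA _ _ hA'
      constructor
      · exact ⟨.prod σA .avail B .avail,
          (VSplit.left B .avail a1).up2 (SubTy.prodRight _ .avail B .unavail B'),
          VSplit.both a2 hB⟩
      · exact ⟨.prod σA2 .avail B'' .avail,
          VSplit.both a3 (VSplit.comm hB),
          (VSplit.left B'' .avail (VSplit.comm a4)).comm.sub
            (SubTy.prodRight _ .avail B'' .unavail B')⟩
  | right _ _ hB' =>
      obtain ⟨⟨σB, b1, b2⟩, ⟨σB2, b3, b4⟩⟩ := IHB _ _ hB'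
      constructor
      · exact ⟨.prod A .avail σB .avail,
          (VSplit.right A .avail b1).up2 (SubTy.prodLeft A .unavail _ .avail A'),
          VSplit.both hA b2⟩
      · exact ⟨.prod A'' .avail σB2 .avail,
          VSplit.both (VSplit.comm hA) b3,
          (VSplit.right A'' .avail (VSplit.comm b4)).comm.sub
            (SubTy.prodLeft A'' .unavail _ .avail A')⟩

lemma nsplit_assoc {τ x y : VSTy} (h : NSplit τ x y) : PP τ x y ∧ PP τ y x := by
  induction h with
  | prod A B =>
      constructor
      · refine PP_of_key rfl ?_
        intro α β hH
        cases hH with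
        | left _ _ h =>
            constructor
            · exact ⟨.prod _ .avail B .avail, VSplit.left B .avail h.toV,
                (VSplit.prod _ B).up2 (SubTy.prodLeft _ .unavail B .avail A)⟩
            · exact ⟨.prod _ .avail B .avail, VSplit.left B .avail (VSplit.comm h.toV),
                (VSplit.prod _ B).up2 (SubTy.prodLeft _ .unavail B .avail A)⟩
      · refine PP_of_key rfl ?_
        intro α β hH
        cases hH with
        | right _ _ h =>
            constructor
            · exact ⟨.prod A .avail _ .avail, VSplit.right A .avail h.toV,
                (VSplit.prod A _).comm.up2 (SubTy.prodRight A .avail _ .unavail B)⟩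
            · exact ⟨.prod A .avail _ .avail, VSplit.right A .avail (VSplit.comm h.toV),
                (VSplit.prod A _).comm.up2 (SubTy.prodRight A .avail _ .unavail B)⟩
  | both hA hB ihA ihB =>
      exact ⟨PP_of_key rfl (key_both hA.toV hB.toV ihA.1 ihB.1),
        PP_of_key rfl (key_both (VSplit.comm hA.toV) (VSplit.comm hB.toV) ihA.2 ihB.2)⟩
  | left C c h ih =>
      rename_i A A' A''
      constructor
      · refine PP_of_key rfl ?_
        intro α β hH
        cases hH with
        | prod =>
            constructor
            · exact ⟨.prod A .avail C .unavail,
                (VSplit.prod A C).up2 (SubTy.prodLeft A .unavail C .avail A'),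
                VSplit.left C .unavail h.toV⟩
            · exact ⟨.prod A'' .avail C .avail,
                VSplit.left C .avail (VSplit.comm h.toV),
                (VSplit.prod A'' C).comm.sub (SubTy.prodLeft A'' .unavail C .avail A')⟩
        | both hA' hC =>
            obtain ⟨⟨σA, a1, a2⟩, ⟨σA2, a3, a4⟩⟩ := ih.1 _ _ hA'
            constructor
            · exact ⟨.prod σA .avail _ .avail, VSplit.both a1 hC.toV,
                (VSplit.left _ .avail a2).up2 (SubTy.prodRight A'' .avail _ .unavail C)⟩
            · exact ⟨.prod σA2 .avail _ .avail, VSplit.both a3 (VSplit.comm hC.toV),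
                (VSplit.left _ .avail a4).up2 (SubTy.prodRight A'' .avail _ .unavail C)⟩
        | left _ _ hA' =>
            obtain ⟨⟨σA, a1, a2⟩, ⟨σA2, a3, a4⟩⟩ := ih.1 _ _ hA'
            constructor
            · exact ⟨.prod σA .avail C c, VSplit.left C c a1, VSplit.left C c a2⟩
            · exact ⟨.prod σA2 .avail C .unavail,
                (VSplit.left C c (VSplit.comm a3)).comm,
                VSplit.left C .unavail a4⟩
        | right _ _ hC =>
            constructor
            · exact ⟨.prod A .avail _ .avail,
                (VSplit.right A .avail hC.toV).up2 (SubTy.prodLeft A .unavail _ .avail A'),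
                (VSplit.left _ .avail h.toV).up2 (SubTy.prodRight A'' .avail _ .unavail C)⟩
            · exact ⟨.prod A'' .avail _ .avail,
                VSplit.both (VSplit.comm h.toV) (VSplit.comm hC.toV),
                ((VSplit.prod A'' _).comm.sub (SubTy.prodLeft A'' .unavail _ .avail A')).up2
                  (SubTy.prodRight A'' .avail _ .unavail C)⟩
      · refine PP_of_key rfl ?_
        intro α β hH
        cases hH with
        | left _ _ hA'' =>
            obtain ⟨⟨σA, a1, a2⟩, ⟨σA2, a3, a4⟩⟩ := ih.2 _ _ hA''
            constructor
            · exact ⟨.prod σA .avail C c, VSplit.left C c a1,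
                (VSplit.left C c (VSplit.comm a2)).comm⟩
            · exact ⟨.prod σA2 .avail C c, VSplit.left C c a3,
                (VSplit.left C c (VSplit.comm a4)).comm⟩
  | right A a h ih =>
      rename_i C C' C''
      constructor
      · refine PP_of_key rfl ?_
        intro α β hH
        cases hH with
        | prod =>
            constructor
            · exact ⟨.prod A .avail C'' .avail,
                VSplit.right A .avail (VSplit.comm h.toV),
                (VSplit.prod A C'').sub (SubTy.prodRight A .avail C'' .unavail C')⟩
            · exact ⟨.prod A .unavail C .avail,
                (VSplit.prod A C).comm.up2 (SubTy.prodRight A .avail C .unavail C'),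
                VSplit.right A .unavail h.toV⟩
        | both hA hC' =>
            obtain ⟨⟨σC, c1, c2⟩, ⟨σC2, c3, c4⟩⟩ := ih.1 _ _ hC'
            constructor
            · exact ⟨.prod _ .avail σC .avail, VSplit.both hA.toV c1,
                (VSplit.right _ .avail c2).up2 (SubTy.prodLeft _ .unavail C'' .avail A)⟩
            · exact ⟨.prod _ .avail σC2 .avail, VSplit.both (VSplit.comm hA.toV) c3,
                (VSplit.right _ .avail c4).up2 (SubTy.prodLeft _ .unavail C'' .avail A)⟩
        | left _ _ hA =>
            constructor
            · exact ⟨.prod _ .avail C .avail,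
                (VSplit.left C .avail hA.toV).up2 (SubTy.prodRight _ .avail C .unavail C'),
                (VSplit.right _ .avail h.toV).up2 (SubTy.prodLeft _ .unavail C'' .avail A)⟩
            · exact ⟨.prod _ .avail C'' .avail,
                VSplit.both (VSplit.comm hA.toV) (VSplit.comm h.toV),
                ((VSplit.prod _ C'').sub (SubTy.prodRight _ .avail C'' .unavail C')).up2
                  (SubTy.prodLeft _ .unavail C'' .avail A)⟩
        | right _ _ hC' =>
            obtain ⟨⟨σC, c1, c2⟩, ⟨σC2, c3, c4⟩⟩ := ih.1 _ _ hC'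
            constructor
            · exact ⟨.prod A a σC .avail, VSplit.right A a c1, VSplit.right A a c2⟩
            · exact ⟨.prod A .unavail σC2 .avail,
                (VSplit.right A a (VSplit.comm c3)).comm,
                VSplit.right A .unavail c4⟩
      · refine PP_of_key rfl ?_
        intro α β hH
        cases hH with
        | right _ _ hC'' =>
            obtain ⟨⟨σC, c1, c2⟩, ⟨σC2, c3, c4⟩⟩ := ih.2 _ _ hC''
            constructor
            · exact ⟨.prod A a σC .avail, VSplit.right A a c1,
                (VSplit.right A a (VSplit.comm c2)).comm⟩
            · exact ⟨.prod A a σC2 .avail, VSplit.right A a c3,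
                (VSplit.right A a (VSplit.comm c4)).comm⟩
  | corec _ ih =>
      constructor
      · intro α β hin
        obtain ⟨⟨σ, p1, p2⟩, ⟨σ', p3, p4⟩⟩ := ih.1 _ _ hin
        exact ⟨⟨σ, .corec p1, p2⟩, ⟨σ', .corec p3, p4⟩⟩
      · intro α β hin
        obtain ⟨⟨σ, p1, p2⟩, ⟨σ', p3, p4⟩⟩ := ih.2 _ _ hin
        exact ⟨⟨σ, .corec p1, p2⟩, ⟨σ', .corec p3, p4⟩⟩
  | comm _ ih => exact ⟨ih.2, ih.1⟩

end SplitAssocAux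

/-- associativity of VS type splitting. -/
theorem split_assoc {τ τ₁ τ₂ τ₁' τ₁'' : VSTy}
    (h₁ : VSplit τ τ₁ τ₂) (h₂ : VSplit τ₁ τ₁' τ₁'') :
    ∃ τ', VSplit τ τ' τ₁'' ∧ VSplit τ' τ₁' τ₂ := by
  obtain ⟨x, y, nxy, sx, sy⟩ := vsplit_extract h₁
  have h₂' : VSplit x τ₁' τ₁'' := split_sub sx h₂
  obtain ⟨p, q, npq, sp, sq⟩ := vsplit_extract h₂'
  obtain ⟨⟨σ, hσ1, hσ2⟩, -⟩ := (nsplit_assoc nxy).1 _ _ npq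
  exact ⟨σ, hσ1.up2 sq, (hσ2.sub sp).up2 sy⟩
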